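/- Let I ⊆ P be an ideal with GFan number 1, and let O(I) denote the set of exponent vectors t such that the monomial X^t does not lie in LT_σ(I) (this set is independent of the monomial order σ by hypothesis). If O is any order ideal of exponent vectors such that the residue classes of the monomials X^t, t ∈ O, form a K-vector-space basis of P/I, then O = O(I). -/

import Mathlib

/-!
Both `O` and `O_σ(I)` index monomials whose residue classes are independent modulo `I`, i.e.
no nonzero element of `I` is supported on either set. Suppose `t ∈ O` but `X^t ∈ LT_σ(I)`, and
let `X^t - r ∈ I` with `r` supported on standard exponents (division by `I`). Every exponent
`s` of `r` satisfies `s ≤ t`: otherwise a lexicographic order with a suitably permuted set of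
variables ranks `s` above `t`, so the leading monomial of `X^t - r` for that order is standard,
whereas it lies in the leading term ideal, which by the GFan hypothesis is `LT_σ(I)`. As `O` is
an order ideal, `X^t - r` is then a nonzero element of `I` supported on `O`: a contradiction.
So `O ⊆ O_σ(I)`. Conversely, for standard `t` write `X^t ≡ p` with `p` supported on `O`; then
`X^t - p ∈ I` is supported on `O_σ(I)`, hence zero, and `t ∈ O`.
-/

open MvPolynomial

/-- The leading monomial (σ-largest exponent vector in the support) of a polynomial. -/
noncomputable def leadMonomial {n : ℕ} {K : Type*} [Field K]
    (m : MonomialOrder (Fin n)) (f : MvPolynomial (Fin n) K) : Fin n →₀ ℕ :=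
  m.toSyn.symm (f.support.sup fun s => m.toSyn s)

/-- The leading term ideal of an ideal. -/
noncomputable def leadTermIdeal {n : ℕ} {K : Type*} [Field K]
    (m : MonomialOrder (Fin n)) (I : Ideal (MvPolynomial (Fin n) K)) :
    Ideal (MvPolynomial (Fin n) K) :=
  Ideal.span {g | ∃ f ∈ I, f ≠ 0 ∧ g = monomial (leadMonomial m f) (1 : K)}

noncomputable section

namespace MonomialOrder

universe u v w

variable {σ : Type u}

/-- The exponents ordered by `m`, moved to the universe `max u w`: monomial orders of different
universes have to be compared, since the GFan hypothesis only quantifies over two fixed ones. -/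
def ULiftSyn (_m : MonomialOrder.{u, v} σ) : Type (max u w) := ULift.{w} (σ →₀ ℕ)

namespace ULiftSyn

variable (m : MonomialOrder.{u, v} σ)

def toSyn : ULiftSyn.{u, v, w} m → m.syn := fun x => m.toSyn (ULift.down x)

instance : AddCommMonoid (ULiftSyn.{u, v, w} m) := inferInstanceAs (AddCommMonoid (ULift _))

instance : LinearOrder (ULiftSyn.{u, v, w} m) :=
  LinearOrder.lift' (toSyn m) (m.toSyn.injective.comp ULift.down_injective)

theorem strictMono_toSyn : StrictMono (toSyn.{u, v, w} m) := fun _ _ h => h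

instance : IsOrderedAddMonoid (ULiftSyn.{u, v, w} m) :=
  (strictMono_toSyn m).isOrderedAddMonoid _ fun _ _ => map_add m.toSyn _ _

instance : WellFoundedLT (ULiftSyn.{u, v, w} m) := (strictMono_toSyn m).wellFoundedLT

end ULiftSyn

def ulift (m : MonomialOrder.{u, v} σ) : MonomialOrder.{u, max u w} σ where
  syn := ULiftSyn.{u, v, w} m
  toSyn := AddEquiv.ulift.symm
  toSyn_monotone := fun _ _ h => m.toSyn_monotone h

theorem ulift_toSyn_le_iff (m : MonomialOrder.{u, v} σ) {a b : σ →₀ ℕ} :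
    (ulift.{u, v, w} m).toSyn a ≤ (ulift m).toSyn b ↔ m.toSyn a ≤ m.toSyn b :=
  Iff.rfl

theorem degree_eq_of_toSyn_le_iff {R : Type*} [CommSemiring R] {m₁ m₂ : MonomialOrder σ}
    (h : ∀ a b, m₁.toSyn a ≤ m₁.toSyn b ↔ m₂.toSyn a ≤ m₂.toSyn b) (f : MvPolynomial σ R) :
    m₁.degree f = m₂.degree f := by
  rcases eq_or_ne f 0 with rfl | hf
  · simp only [degree_zero]
  · refine m₂.toSyn.injective (le_antisymm (m₂.le_degree (m₁.degree_mem_support hf)) ?_)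
    exact (h _ _).mp (m₁.le_degree (m₂.degree_mem_support hf))

def domCongr {τ : Type*} (e : σ ≃ τ) (m : MonomialOrder τ) : MonomialOrder σ where
  syn := m.syn
  toSyn := (Finsupp.domCongr e).trans m.toSyn
  toSyn_monotone a b h := m.toSyn_monotone (a := Finsupp.domCongr e a) (b := Finsupp.domCongr e b)
    fun j => by simpa using h (e.symm j)

theorem lex_lt_of_lt_of_isBot [LinearOrder σ] [WellFoundedGT σ] {c d : σ →₀ ℕ} {i : σ}
    (hi : IsBot i) (h : c i < d i) : c ≺[lex] d :=
  lex_lt_iff.mpr (Finsupp.Lex.lt_iff.mpr ⟨i, fun j hj => absurd (hi j) (not_le.mpr hj), h⟩)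

theorem exists_toSyn_lt_of_not_le {n : ℕ} {t u : Fin n →₀ ℕ} (h : ¬u ≤ t) :
    ∃ m : MonomialOrder.{0, 0} (Fin n), m.toSyn t < m.toSyn u := by
  obtain ⟨i, hi⟩ : ∃ i, t i < u i := by simpa [Finsupp.le_def] using h
  obtain _ | n := n
  · exact i.elim0
  refine ⟨domCongr (Equiv.swap 0 i) lex, ?_⟩
  show Finsupp.domCongr (Equiv.swap 0 i) t ≺[lex] Finsupp.domCongr (Equiv.swap 0 i) u
  exact lex_lt_of_lt_of_isBot (i := 0) Fin.zero_le (by simpa using hi)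

end MonomialOrder

end

theorem mem_support_monomial_sub {σ R : Type*} [CommRing R] {t s : σ →₀ ℕ}
    {r : MvPolynomial σ R} (hs : s ∈ (monomial t 1 - r).support) : s = t ∨ s ∈ r.support := by
  classical
  rcases Finset.mem_union.mp (support_sub σ _ _ hs) with h | h
  · exact .inl (Finset.mem_singleton.mp (support_monomial_subset h))
  · exact .inr h

section BasicSet

variable {σ R : Type*} [CommRing R] {I : Ideal (MvPolynomial σ R)} {O : Set (σ →₀ ℕ)}

theorem eq_zero_of_mem_of_support_subset
    (hind : LinearIndependent R fun t : O => Ideal.Quotient.mk I (monomial (t : σ →₀ ℕ) (1 : R)))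
    {f : MvPolynomial σ R} (hf : f ∈ I) (hO : ↑f.support ⊆ O) : f = 0 := by
  have hdisj := Submodule.range_ker_disjoint (f := (Ideal.Quotient.mkₐ R I).toLinearMap) hind
  rw [← Set.image_eq_range (monomial · (1 : R)), ← restrictSupport_eq_span] at hdisj
  exact Submodule.disjoint_def.mp hdisj f hO (Ideal.Quotient.eq_zero_iff_mem.mpr hf)

theorem exists_sub_mem_support_subset
    (hspan : Submodule.span R (Set.range fun t : O =>
      Ideal.Quotient.mk I (monomial (t : σ →₀ ℕ) (1 : R))) = ⊤)
    (f : MvPolynomial σ R) : ∃ p, f - p ∈ I ∧ ↑p.support ⊆ O := by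
  have hmap : (restrictSupport R O).map (Ideal.Quotient.mkₐ R I).toLinearMap = ⊤ := by
    rw [restrictSupport_eq_span, Submodule.map_span, ← Set.image_comp, Set.image_eq_range]
    exact hspan
  obtain ⟨p, hpO, hp⟩ := hmap.ge (Submodule.mem_top (x := Ideal.Quotient.mk I f))
  exact ⟨p, Ideal.Quotient.eq.mp hp.symm, hpO⟩

end BasicSet

section LeadTermIdeal

variable {n : ℕ} {K : Type*} [Field K] (m : MonomialOrder (Fin n))
  (I : Ideal (MvPolynomial (Fin n) K))

/-- The set `O_σ(I)`. -/
def standardExponents : Set (Fin n →₀ ℕ) := {t | monomial t (1 : K) ∉ leadTermIdeal m I}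

theorem leadMonomial_eq_degree (f : MvPolynomial (Fin n) K) : leadMonomial m f = m.degree f :=
  rfl

theorem leadTermIdeal_eq_of_toSyn_le_iff {m₁ m₂ : MonomialOrder (Fin n)}
    (h : ∀ a b, m₁.toSyn a ≤ m₁.toSyn b ↔ m₂.toSyn a ≤ m₂.toSyn b) :
    leadTermIdeal m₁ I = leadTermIdeal m₂ I := by
  simp only [leadTermIdeal, leadMonomial_eq_degree, MonomialOrder.degree_eq_of_toSyn_le_iff h]

theorem leadTermIdeal_ulift : leadTermIdeal m.ulift I = leadTermIdeal m I :=
  leadTermIdeal_eq_of_toSyn_le_iff I fun _ _ => m.ulift_toSyn_le_iff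

variable {m I}

theorem monomial_degree_mem_leadTermIdeal {f : MvPolynomial (Fin n) K} (hf : f ∈ I)
    (hf0 : f ≠ 0) : monomial (m.degree f) (1 : K) ∈ leadTermIdeal m I :=
  Ideal.subset_span ⟨f, hf, hf0, rfl⟩

theorem monomial_mem_leadTermIdeal_iff {t : Fin n →₀ ℕ} :
    monomial t (1 : K) ∈ leadTermIdeal m I ↔ ∃ f ∈ I, f ≠ 0 ∧ m.degree f ≤ t := by
  have hset : {g | ∃ f ∈ I, f ≠ 0 ∧ g = monomial (leadMonomial m f) (1 : K)} =
      (monomial · 1) '' {s | ∃ f ∈ I, f ≠ 0 ∧ m.degree f = s} := by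
    ext g
    constructor
    · rintro ⟨f, hfI, hf, rfl⟩
      exact ⟨_, ⟨f, hfI, hf, rfl⟩, rfl⟩
    · rintro ⟨s, ⟨f, hfI, hf, rfl⟩, rfl⟩
      exact ⟨f, hfI, hf, rfl⟩
  classical
  rw [leadTermIdeal, hset, mem_ideal_span_monomial_image, support_monomial, if_neg one_ne_zero]
  simp [and_assoc]

theorem eq_zero_of_support_subset_standardExponents {f : MvPolynomial (Fin n) K} (hf : f ∈ I)
    (hstd : ↑f.support ⊆ standardExponents m I) : f = 0 := by
  by_contra hf0
  exact hstd (m.degree_mem_support hf0) (monomial_degree_mem_leadTermIdeal hf hf0)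

variable (m I)

theorem exists_sub_mem_support_subset_standardExponents (f : MvPolynomial (Fin n) K) :
    ∃ r, f - r ∈ I ∧ ↑r.support ⊆ standardExponents m I := by
  obtain ⟨g, r, hfgr, -, hr⟩ := m.div_set (B := {b | b ∈ I ∧ b ≠ 0})
    (fun b hb => (m.leadingCoeff_ne_zero_iff.mpr hb.2).isUnit) f
  refine ⟨r, ?_, fun t ht htI => ?_⟩
  · rw [hfgr, add_sub_cancel_right]
    exact Submodule.finsuppSum_mem _ _ _ _ fun b _ => I.smul_mem _ b.2.1
  · obtain ⟨b, hbI, hb0, hbt⟩ := monomial_mem_leadTermIdeal_iff.mp htI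
    exact hr t ht b ⟨hbI, hb0⟩ hbt

end LeadTermIdeal

section GFan

variable {n : ℕ} {K : Type*} [Field K] {m : MonomialOrder (Fin n)}
  {I : Ideal (MvPolynomial (Fin n) K)} {O : Set (Fin n →₀ ℕ)}

theorem le_of_mem_support_of_forall_leadTermIdeal_eq
    (hLT : ∀ τ : MonomialOrder.{0, 0} (Fin n), leadTermIdeal τ I = leadTermIdeal m I)
    {g : MvPolynomial (Fin n) K} (hg : g ∈ I) {t : Fin n →₀ ℕ}
    (hstd : ∀ s ∈ g.support, s ≠ t → s ∈ standardExponents m I)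
    {s : Fin n →₀ ℕ} (hs : s ∈ g.support) : s ≤ t := by
  by_contra hst
  obtain ⟨τ, hτ⟩ := MonomialOrder.exists_toSyn_lt_of_not_le hst
  have hg0 : g ≠ 0 := by rintro rfl; simp at hs
  have hdeg : τ.degree g = t := by
    by_contra hne
    exact hstd _ (τ.degree_mem_support hg0) hne (hLT τ ▸ monomial_degree_mem_leadTermIdeal hg hg0)
  exact (τ.le_degree hs).not_gt (hdeg ▸ hτ)

theorem subset_standardExponents
    (hLT : ∀ τ : MonomialOrder.{0, 0} (Fin n), leadTermIdeal τ I = leadTermIdeal m I)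
    (hOrd : ∀ t ∈ O, ∀ s : Fin n →₀ ℕ, s ≤ t → s ∈ O)
    (hind : LinearIndependent K fun t : O =>
      Ideal.Quotient.mk I (monomial (t : Fin n →₀ ℕ) (1 : K))) :
    O ⊆ standardExponents m I := by
  intro t htO htLT
  obtain ⟨r, hrI, hr⟩ := exists_sub_mem_support_subset_standardExponents m I (monomial t 1)
  have htr : t ∉ r.support := fun h => hr h htLT
  have hgO : ↑(monomial t 1 - r).support ⊆ O := fun s hs =>
    hOrd t htO s <| le_of_mem_support_of_forall_leadTermIdeal_eq hLT hrI
      (fun s hs hst => hr ((mem_support_monomial_sub hs).resolve_left hst)) hs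
  have hcoeff := congr_arg (coeff t) (eq_zero_of_mem_of_support_subset hind hrI hgO)
  simp [notMem_support_iff.mp htr] at hcoeff

theorem standardExponents_subset_of_subset
    (hspan : Submodule.span K (Set.range fun t : O =>
      Ideal.Quotient.mk I (monomial (t : Fin n →₀ ℕ) (1 : K))) = ⊤)
    (hO : O ⊆ standardExponents m I) : standardExponents m I ⊆ O := by
  intro t ht
  obtain ⟨p, hpI, hpO⟩ := exists_sub_mem_support_subset hspan (monomial t 1)
  have hp : monomial t 1 - p = 0 := eq_zero_of_support_subset_standardExponents hpI fun s hs =>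
    (mem_support_monomial_sub hs).elim (fun h => h ▸ ht) (fun h => hO (hpO h))
  rw [sub_eq_zero] at hp
  exact hpO (hp ▸ by simp)

end GFan

/-- If `I` has GFan number 1, then the complement `O(I)` of its (unique) leading term
ideal is the unique order ideal whose monomial residue classes form a `K`-basis
of `P/I`. -/
theorem unique_basic_set_of_GFanNum_one
    {n : ℕ} {K : Type*} [Field K] (I : Ideal (MvPolynomial (Fin n) K))
    (hGF : ∀ m τ : MonomialOrder (Fin n), leadTermIdeal m I = leadTermIdeal τ I)
    (m : MonomialOrder (Fin n))
    (O : Set (Fin n →₀ ℕ))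
    (hOrd : ∀ t ∈ O, ∀ s : Fin n →₀ ℕ, s ≤ t → s ∈ O)
    (hind : LinearIndependent K fun t : O =>
        Ideal.Quotient.mk I (monomial (t : Fin n →₀ ℕ) (1 : K)))
    (hspan : Submodule.span K
        (Set.range fun t : O =>
          Ideal.Quotient.mk I (monomial (t : Fin n →₀ ℕ) (1 : K))) = ⊤) :
    O = {t : Fin n →₀ ℕ | monomial t (1 : K) ∉ leadTermIdeal m I} := by
  have hLT (τ : MonomialOrder.{0, 0} (Fin n)) : leadTermIdeal τ I = leadTermIdeal m I := by
    rw [← leadTermIdeal_ulift τ, ← leadTermIdeal_ulift m, hGF]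
  have hO := subset_standardExponents hLT hOrd hind
  exact hO.antisymm (standardExponents_subset_of_subset hspan hO)
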